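/- arXiv:1401.0271 — 6 statements merged into one kernel-verified Lean document; each statement's English description precedes it below -/
import Mathlib

section
/- If (N,a) is balanced, then the image of the differential D F_{(Id,a)} is orthogonal to the vector (i·p)_{p∈V}: for all (Φ̇, ȧ), ⟨D F_{(Id,a)}(Φ̇,ȧ), (i p)_p⟩ = 0. -/
open Complex Finset

private noncomputable def Tt (a b : ℂ → ℂ → ℝ) (Ψ : ℂ → ℂ) (p q : ℂ) : ℂ :=
  (b p q : ℂ) * (q - p) / (‖q - p‖ : ℂ)
    + (a p q : ℂ) * ((Ψ q - Ψ p) / (‖q - p‖ : ℂ)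
        - (q - p) * (((((starRingEnd ℂ) (q - p) * (Ψ q - Ψ p)).re : ℝ) /
            ((‖q - p‖ : ℝ) ^ 3) : ℝ) : ℂ))

private theorem alg_core (w u : ℂ) (aa bb r : ℝ) (hr : r ≠ 0)
    (hw : (starRingEnd ℂ) w * w = ((r^2 : ℝ) : ℂ)) :
    (I * (starRingEnd ℂ) w *
      ((bb : ℂ) * w / (r : ℂ) + (aa : ℂ) * (u / (r : ℂ)
        - w * (((((starRingEnd ℂ) w * u).re : ℝ) / (r ^ 3) : ℝ) : ℂ)))).re
    = -aa * ((starRingEnd ℂ) w * u).im / r := by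
  set s := (starRingEnd ℂ) w * u with hs
  have hrc : (r : ℂ) ≠ 0 := by exact_mod_cast hr
  have key : I * (starRingEnd ℂ) w *
      ((bb : ℂ) * w / (r : ℂ) + (aa : ℂ) * (u / (r : ℂ)
        - w * (((s.re : ℝ) / (r ^ 3) : ℝ) : ℂ)))
      = ((bb * r : ℝ) : ℂ) * I + (aa : ℂ) * (I * s) / (r : ℂ)
        - ((aa * s.re / r : ℝ) : ℂ) * I := by
    push_cast at hw ⊢
    field_simp
    linear_combination ((bb:ℂ)*(r:ℂ)^2 - (aa:ℂ)*((s.re:ℝ):ℂ)) * hw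
  rw [key]
  simp [Complex.div_re, Complex.normSq_ofReal, Complex.mul_re, Complex.mul_im]
  field_simp

private theorem Tt_antisymm (a b : ℂ → ℂ → ℝ) (Ψ : ℂ → ℂ)
    (hasymm : ∀ p q, a p q = a q p) (hbsymm : ∀ p q, b p q = b q p) (p q : ℂ) :
    Tt a b Ψ q p = - Tt a b Ψ p q := by
  unfold Tt
  rw [hasymm q p, hbsymm q p, norm_sub_rev p q]
  have hc : (starRingEnd ℂ) (p - q) * (Ψ p - Ψ q)
      = (starRingEnd ℂ) (q - p) * (Ψ q - Ψ p) := by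
    rw [map_sub, map_sub]; ring
  rw [hc]; ring

/-- If `(N,a)` is balanced, then the image of the differential `D F_{(Id,a)}`
is orthogonal (for the real inner product on `ℂ^V`) to the vector
`(i·p)_{p∈V}`: for every direction `(Ψ, b)` one has
`∑_{p∈V} ⟨i·p, D F_{(Id,a)}(Ψ,b)(p)⟩_ℝ = 0`. -/
theorem force_differential_orthogonal_to_rotation_of_balanced
    (V : Finset ℂ) (E : ℂ → ℂ → Prop) [DecidableRel E] (a : ℂ → ℂ → ℝ)
    (hEsymm : ∀ p q, E p q → E q p)
    (hEne : ∀ p q, E p q → p ≠ q)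
    (hasymm : ∀ p q, a p q = a q p)
    (hbal : ∀ p ∈ V, ∑ q ∈ V.filter (fun q => E p q),
      (a p q : ℂ) * (q - p) / (‖q - p‖ : ℂ) = 0)
    (Ψ : ℂ → ℂ) (b : ℂ → ℂ → ℝ)
    (hbsymm : ∀ p q, b p q = b q p) :
    ∑ p ∈ V,
      ((starRingEnd ℂ (Complex.I * p)) *
        (∑ q ∈ V.filter (fun q => E p q),
          ((b p q : ℂ) * (q - p) / (‖q - p‖ : ℂ)
            + (a p q : ℂ) *
              ((Ψ q - Ψ p) / (‖q - p‖ : ℂ)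
                - (q - p) *
                  (((((starRingEnd ℂ (q - p)) * (Ψ q - Ψ p)).re : ℝ) /
                    ((‖q - p‖ : ℝ) ^ 3) : ℝ) : ℂ))))).re = 0 := by
  classical
  -- notation
  set G : ℂ → ℂ → ℝ := fun p q =>
    if E p q then ((starRingEnd ℂ (Complex.I * p)) * Tt a b Ψ p q).re else 0 with hG
  set c2 : ℂ → ℂ → ℝ := fun p q =>
    a p q * ((starRingEnd ℂ (q - p)) * Ψ p).im / ‖q - p‖ with hc2
  set c1 : ℂ → ℂ → ℝ := fun p q =>
    -(a p q) * ((starRingEnd ℂ (q - p)) * Ψ q).im / ‖q - p‖ with hc1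
  -- Step 1: rewrite LHS as a double sum
  have hS : (∑ p ∈ V,
      ((starRingEnd ℂ (Complex.I * p)) *
        (∑ q ∈ V.filter (fun q => E p q),
          ((b p q : ℂ) * (q - p) / (‖q - p‖ : ℂ)
            + (a p q : ℂ) *
              ((Ψ q - Ψ p) / (‖q - p‖ : ℂ)
                - (q - p) *
                  (((((starRingEnd ℂ (q - p)) * (Ψ q - Ψ p)).re : ℝ) /
                    ((‖q - p‖ : ℝ) ^ 3) : ℝ) : ℂ))))).re)
      = ∑ p ∈ V, ∑ q ∈ V, G p q := by
    refine Finset.sum_congr rfl fun p _ => ?_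
    rw [show (∑ q ∈ V.filter (fun q => E p q),
          ((b p q : ℂ) * (q - p) / (‖q - p‖ : ℂ)
            + (a p q : ℂ) *
              ((Ψ q - Ψ p) / (‖q - p‖ : ℂ)
                - (q - p) *
                  (((((starRingEnd ℂ (q - p)) * (Ψ q - Ψ p)).re : ℝ) /
                    ((‖q - p‖ : ℝ) ^ 3) : ℝ) : ℂ))))
        = ∑ q ∈ V.filter (fun q => E p q), Tt a b Ψ p q from rfl]
    rw [Finset.mul_sum, Complex.re_sum, ← Finset.sum_filter]
  rw [hS]
  -- Step 2: the per-pair symmetrization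
  have hpair : ∀ p q : ℂ, G p q + G q p
      = (if E p q then c1 p q else 0) + (if E p q then c2 p q else 0) := by
    intro p q
    by_cases hE : E p q
    · have hE' : E q p := hEsymm _ _ hE
      have hne := hEne _ _ hE
      have hw0 : q - p ≠ 0 := sub_ne_zero.mpr (Ne.symm hne)
      have hr : ‖q - p‖ ≠ 0 := norm_ne_zero_iff.mpr hw0
      simp only [hG, hc1, hc2, if_pos hE, if_pos hE']
      rw [Tt_antisymm a b Ψ hasymm hbsymm p q]
      have comb : (starRingEnd ℂ (Complex.I * p)) * Tt a b Ψ p q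
          + (starRingEnd ℂ (Complex.I * q)) * (- Tt a b Ψ p q)
          = Complex.I * (starRingEnd ℂ (q - p)) * Tt a b Ψ p q := by
        simp only [map_mul, map_sub, Complex.conj_I]; ring
      rw [← Complex.add_re, comb]
      have hw : (starRingEnd ℂ) (q - p) * (q - p)
          = ((‖q - p‖ ^ 2 : ℝ) : ℂ) := by
        rw [Complex.conj_mul']; norm_cast
      have := alg_core (q - p) (Ψ q - Ψ p) (a p q) (b p q) (‖q - p‖) hr hw
      rw [show Tt a b Ψ p q =
        ((b p q : ℂ) * (q - p) / ((‖q - p‖ : ℝ) : ℂ)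
          + (a p q : ℂ) * ((Ψ q - Ψ p) / ((‖q - p‖ : ℝ) : ℂ)
            - (q - p) * (((((starRingEnd ℂ) (q - p) * (Ψ q - Ψ p)).re : ℝ) /
                ((‖q - p‖ : ℝ) ^ 3) : ℝ) : ℂ))) from rfl]
      rw [this]
      have him : ((starRingEnd ℂ) (q - p) * (Ψ q - Ψ p)).im
          = ((starRingEnd ℂ) (q - p) * Ψ q).im - ((starRingEnd ℂ) (q - p) * Ψ p).im := by
        rw [mul_sub, Complex.sub_im]
      rw [him]; ring
    · have hE' : ¬ E q p := fun h => hE (hEsymm q p h)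
      simp [hG, hE, hE']
  -- Step 3: the c2-sum vanishes by balancedness
  have hC : ∀ p ∈ V, (∑ q ∈ V, if E p q then c2 p q else 0) = 0 := by
    intro p hp
    have h0 := hbal p hp
    have heq : (∑ q ∈ V, if E p q then c2 p q else 0)
        = ((starRingEnd ℂ (∑ q ∈ V.filter (fun q => E p q),
            (a p q : ℂ) * (q - p) / (‖q - p‖ : ℂ))) * Ψ p).im := by
      rw [map_sum, Finset.sum_mul, Complex.im_sum, ← Finset.sum_filter]
      refine Finset.sum_congr rfl fun q hq => ?_
      rw [Finset.mem_filter] at hq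
      have hE : E p q := hq.2
      have hne := hEne _ _ hE
      have hw0 : q - p ≠ 0 := sub_ne_zero.mpr (Ne.symm hne)
      have hr : ‖q - p‖ ≠ 0 := norm_ne_zero_iff.mpr hw0
      have hrc : ((‖q - p‖ : ℝ) : ℂ) ≠ 0 := by exact_mod_cast hr
      have hconj : (starRingEnd ℂ) ((a p q : ℂ) * (q - p) / (‖q - p‖ : ℂ))
          = (a p q : ℂ) * (starRingEnd ℂ (q - p)) / ((‖q - p‖ : ℝ) : ℂ) := by
        rw [map_div₀, map_mul, Complex.conj_ofReal, Complex.conj_ofReal]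
      rw [hconj]
      rw [show (a p q : ℂ) * (starRingEnd ℂ (q - p)) / ((‖q - p‖ : ℝ) : ℂ) * Ψ p
          = ((a p q : ℂ) * ((starRingEnd ℂ (q - p)) * Ψ p)) / ((‖q - p‖ : ℝ) : ℂ)
          from by ring]
      rw [Complex.div_ofReal_im]
      simp [hc2]
    rw [heq, h0]
    simp
  -- Step 4: the c1-sum equals the c2-sum (by swapping)
  have h15 : ∀ p q : ℂ, (if E q p then c1 q p else 0) = (if E p q then c2 p q else 0) := by
    intro p q
    have hiff : E q p ↔ E p q := ⟨hEsymm q p, hEsymm p q⟩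
    by_cases hE : E p q
    · rw [if_pos (hiff.mpr hE), if_pos hE]
      simp only [hc1, hc2]
      rw [hasymm q p, norm_sub_rev p q]
      have : (starRingEnd ℂ) (p - q) * Ψ p = -((starRingEnd ℂ) (q - p) * Ψ p) := by
        rw [show p - q = -(q - p) from by ring, map_neg]; ring
      rw [this, Complex.neg_im]; ring
    · rw [if_neg (fun h => hE (hiff.mp h)), if_neg hE]
  have hc1sum : (∑ p ∈ V, ∑ q ∈ V, if E p q then c1 p q else 0)
      = ∑ p ∈ V, ∑ q ∈ V, if E p q then c2 p q else 0 := by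
    rw [Finset.sum_comm]
    exact Finset.sum_congr rfl fun p _ => Finset.sum_congr rfl fun q _ => h15 p q
  -- assemble
  have hcomb : ∀ (A B : ℂ → ℂ → ℝ),
      (∑ p ∈ V, ∑ q ∈ V, A p q) + (∑ p ∈ V, ∑ q ∈ V, B p q)
        = ∑ p ∈ V, ∑ q ∈ V, (A p q + B p q) := by
    intro A B
    rw [← Finset.sum_add_distrib]
    exact Finset.sum_congr rfl fun p _ => (Finset.sum_add_distrib).symm
  have hdouble : (∑ p ∈ V, ∑ q ∈ V, G p q) + (∑ p ∈ V, ∑ q ∈ V, G p q)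
      = (∑ p ∈ V, ∑ q ∈ V, if E p q then c1 p q else 0)
        + (∑ p ∈ V, ∑ q ∈ V, if E p q then c2 p q else 0) := by
    calc (∑ p ∈ V, ∑ q ∈ V, G p q) + (∑ p ∈ V, ∑ q ∈ V, G p q)
        = (∑ p ∈ V, ∑ q ∈ V, G p q) + (∑ p ∈ V, ∑ q ∈ V, G q p) := by
          rw [Finset.sum_comm (s := V) (t := V) (f := fun q p => G q p)]
      _ = ∑ p ∈ V, ∑ q ∈ V, (G p q + G q p) := hcomb _ _
      _ = ∑ p ∈ V, ∑ q ∈ V, ((if E p q then c1 p q else 0) + (if E p q then c2 p q else 0)) :=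
          Finset.sum_congr rfl fun p _ => Finset.sum_congr rfl fun q _ => hpair p q
      _ = _ := (hcomb _ _).symm
  have hz2 : (∑ p ∈ V, ∑ q ∈ V, if E p q then c2 p q else 0) = 0 :=
    Finset.sum_eq_zero hC
  have : (∑ p ∈ V, ∑ q ∈ V, G p q) + (∑ p ∈ V, ∑ q ∈ V, G p q) = 0 := by
    rw [hdouble, hc1sum, hz2]; ring
  linarith
end

section
/- For the linear path network with vertices z_0, …, z_{n-1} (|z_{j+1} - z_j| = 1, edges [z_j, z_{j+1}]) and any weight a : E → ℝ\{0}, the map Λ(Φ̇, ȧ) = (D F_{(Id,a)}(Φ̇, ȧ), D L_{Id}(Φ̇)) restricted to the complement of the translation kernel is injective; equivalently Λ has rank 3n - 3 on ℂ^n × ℝ^{n-1}. -/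
/-!
Because the path is a tree, the force balance can be solved edge by edge: at the end vertex `z 0`
only the first edge contributes, and the balance at each interior vertex passes the vanishing of
the force differential on to the next edge. On a single edge with direction `d`, the length
condition says that the relative perturbation `Ψ'` is orthogonal to `d`, so the force differential
reduces to `ȧ d + a Ψ'`; its component along `d` is `ȧ` and the rest is `a Ψ'`, hence both vanish.
-/

/-- Differential of the force contribution of a single unit edge with direction
`d` (`|d| = 1`), weight `w`, weight perturbation `wdot`, and relative vertex
perturbation `dPhi` (value of `Φ̇` at the far end minus at the near end):
`ẇ d + w (Φ̇' - d ⟨d, Φ̇'⟩_ℝ)`. -/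
noncomputable def dForce (w wdot : ℝ) (d dPhi : ℂ) : ℂ :=
  (wdot : ℂ) * d +
    (w : ℂ) * (dPhi - d * ((((starRingEnd ℂ d) * dPhi).re : ℝ) : ℂ))

lemma dForce_neg (w wdot : ℝ) (d dPhi : ℂ) :
    dForce w wdot (-d) (-dPhi) = -dForce w wdot d dPhi := by
  simp only [dForce, map_neg, neg_mul_neg]
  ring

lemma dForce_of_re_conj_mul_eq_zero {w wdot : ℝ} {d dPhi : ℂ}
    (h : (starRingEnd ℂ d * dPhi).re = 0) :
    dForce w wdot d dPhi = wdot * d + w * dPhi := by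
  simp [dForce, h]

lemma eq_zero_of_dForce_eq_zero {w wdot : ℝ} {d dPhi : ℂ} (hw : w ≠ 0) (hd : d ≠ 0)
    (horth : (starRingEnd ℂ d * dPhi).re = 0) (hF : dForce w wdot d dPhi = 0) :
    wdot = 0 ∧ dPhi = 0 := by
  rw [dForce_of_re_conj_mul_eq_zero horth] at hF
  have hproj : (starRingEnd ℂ d * (wdot * d + w * dPhi)).re = wdot * Complex.normSq d := by
    rw [mul_add, mul_left_comm, ← Complex.normSq_eq_conj_mul_self, mul_left_comm,
      Complex.add_re, Complex.re_ofReal_mul, Complex.re_ofReal_mul, horth, Complex.ofReal_re,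
      mul_zero, add_zero]
  have hwdot : wdot = 0 := by
    rw [hF, mul_zero, Complex.zero_re, eq_comm] at hproj
    exact (mul_eq_zero.mp hproj).resolve_right (Complex.normSq_pos.mpr hd).ne'
  refine ⟨hwdot, ?_⟩
  rw [hwdot, Complex.ofReal_zero, zero_mul, zero_add] at hF
  exact (mul_eq_zero.mp hF).resolve_left (Complex.ofReal_ne_zero.mpr hw)

lemma eq_apply_zero_of_forall_succ_eq {α : Type*} {n : ℕ} {f : ℕ → α}
    (h : ∀ j, j + 1 < n → f (j + 1) = f j) : ∀ j < n, f j = f 0 := by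
  intro j hj
  induction j with
  | zero => rfl
  | succ k ih => rw [h k hj, ih (by omega)]

theorem path_network_flexible_general
    (n : ℕ) (z : ℕ → ℂ) (a adot : ℕ → ℝ) (Ψ : ℕ → ℂ)
    (hunit : ∀ j, j + 1 < n → ‖z (j + 1) - z j‖ = 1)
    (ha : ∀ j, j + 1 < n → a j ≠ 0)
    (hDF : ∀ j < n,
      (if j + 1 < n then
        dForce (a j) (adot j) (z (j + 1) - z j) (Ψ (j + 1) - Ψ j) else 0)
      + (if 0 < j then
          dForce (a (j - 1)) (adot (j - 1)) (z (j - 1) - z j) (Ψ (j - 1) - Ψ j)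
        else 0) = 0)
    (hDL : ∀ j, j + 1 < n →
      ((starRingEnd ℂ (z j - z (j + 1))) * (Ψ j - Ψ (j + 1))).re = 0) :
    (∀ j < n, Ψ j = Ψ 0) ∧ (∀ j, j + 1 < n → adot j = 0) := by
  set F : ℕ → ℂ := fun j ↦ dForce (a j) (adot j) (z (j + 1) - z j) (Ψ (j + 1) - Ψ j)
  have hF_succ : ∀ k, k + 1 < n - 1 → F (k + 1) = F k := by
    intro k hk
    have h := hDF (k + 1) (by omega)
    rw [if_pos (by omega), if_pos k.succ_pos, Nat.add_sub_cancel, ← neg_sub (z (k + 1)) (z k),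
      ← neg_sub (Ψ (k + 1)) (Ψ k), dForce_neg, ← sub_eq_add_neg] at h
    exact eq_of_sub_eq_zero h
  have hF : ∀ j, j + 1 < n → F j = 0 := by
    intro j hj
    have h0 := hDF 0 (by omega)
    rw [if_pos (by omega), if_neg (lt_irrefl 0), add_zero] at h0
    rw [eq_apply_zero_of_forall_succ_eq hF_succ j (by omega)]
    exact h0
  have hedge : ∀ j, j + 1 < n → adot j = 0 ∧ Ψ (j + 1) - Ψ j = 0 := by
    intro j hj
    have horth := hDL j hj
    rw [← neg_sub (z (j + 1)), ← neg_sub (Ψ (j + 1)), map_neg, neg_mul_neg] at horth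
    have hd : z (j + 1) - z j ≠ 0 := norm_ne_zero_iff.mp (by rw [hunit j hj]; exact one_ne_zero)
    exact eq_zero_of_dForce_eq_zero (ha j hj) hd horth (hF j hj)
  exact ⟨eq_apply_zero_of_forall_succ_eq fun j hj ↦ eq_of_sub_eq_zero (hedge j hj).2,
    fun j hj ↦ (hedge j hj).1⟩

/-- For the linear path network with vertices `z 0, …, z (n-1)`
(`|z (j+1) - z j| = 1`, edges `[z j, z (j+1)]`) and any nowhere–vanishing
weight `a`, the map `Λ(Φ̇, ȧ) = (D F_{(Id,a)}(Φ̇, ȧ), D L_{Id}(Φ̇))` has kernel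
reduced to the translations: if all components of `D F` and `D L` vanish, then
`Φ̇` is constant and `ȧ = 0`.  Equivalently `Λ` has rank `3n - 3`. -/
theorem path_network_flexible
    (n : ℕ) (hn : 2 ≤ n) (z : ℕ → ℂ) (a adot : ℕ → ℝ) (Ψ : ℕ → ℂ)
    (hzinj : ∀ j k, j < n → k < n → z j = z k → j = k)
    (hunit : ∀ j, j + 1 < n → ‖z (j + 1) - z j‖ = 1)
    (ha : ∀ j, j + 1 < n → a j ≠ 0)
    (hDF : ∀ j < n,
      (if j + 1 < n then
        dForce (a j) (adot j) (z (j + 1) - z j) (Ψ (j + 1) - Ψ j) else 0)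
      + (if 0 < j then
          dForce (a (j - 1)) (adot (j - 1)) (z (j - 1) - z j) (Ψ (j - 1) - Ψ j)
        else 0) = 0)
    (hDL : ∀ j, j + 1 < n →
      ((starRingEnd ℂ (z j - z (j + 1))) * (Ψ j - Ψ (j + 1))).re = 0) :
    (∀ j < n, Ψ j = Ψ 0) ∧ (∀ j, j + 1 < n → adot j = 0) :=
  path_network_flexible_general n z a adot Ψ hunit ha hDF hDL
end

section
/- For the unit equilateral triangle with vertices z_j = ζ^j/√3 (ζ = e^{2πi/3}, j = 0,1,2) and weights a on its three edges, the map Λ = (D F_{(Id,a)}, D L_{Id}) has rank 7 if and only if a_{[z_0,z_1]} + a_{[z_1,z_2]} + a_{[z_2,z_0]} ≠ 0. -/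
open Complex ComplexConjugate

theorem ZMod.induction_add_one {n : ℕ} [NeZero n] {P : ZMod n → Prop} (zero : P 0)
    (succ : ∀ j, P j → P (j + 1)) (j : ZMod n) : P j := by
  rw [← ZMod.natCast_zmod_val j]
  induction j.val with
  | zero => simpa using zero
  | succ k ih => simpa using succ _ ih

theorem pow_zmod_val_add_one {M : Type*} [Monoid M] {n : ℕ} [NeZero n] {x : M}
    (hx : x ^ n = 1) (j : ZMod n) : x ^ (j + 1).val = x ^ j.val * x := by
  have : j + 1 = ((j.val + 1 : ℕ) : ZMod n) := by push_cast [ZMod.natCast_zmod_val]; rfl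
  rw [this, ZMod.val_natCast, ← pow_eq_pow_mod _ hx, pow_succ]

theorem ZMod.apply_sub_one_add_apply_add_apply_add_one {M : Type*} [AddCommMonoid M]
    (a : ZMod 3 → M) (j : ZMod 3) : a (j - 1) + a j + a (j + 1) = a 0 + a 1 + a 2 := by
  fin_cases j
  · exact (by abel : a 2 + a 0 + a 1 = a 0 + a 1 + a 2)
  · rfl
  · exact (by abel : a 1 + a 2 + a 0 = a 0 + a 1 + a 2)

theorem ZMod.sum_three {M : Type*} [AddCommMonoid M] (f : ZMod 3 → M) :
    ∑ j, f j = f 0 + f 1 + f 2 :=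
  Fin.sum_univ_three f

theorem ZMod.apply_ne_zero_of_apply_add_one_eq_mul {n : ℕ} [NeZero n] {M₀ : Type*}
    [MulZeroClass M₀] [NoZeroDivisors M₀] {c : M₀} {f : ZMod n → M₀} (hc : c ≠ 0)
    (hf : ∀ j, f (j + 1) = c * f j) (hf0 : f 0 ≠ 0) (j : ZMod n) : f j ≠ 0 := by
  induction j using ZMod.induction_add_one with
  | zero => exact hf0
  | succ j ih => rw [hf]; exact mul_ne_zero hc ih

theorem Fintype.sum_eq_zero_of_mul_eq_sub {G R : Type*} [AddGroup G] [Fintype G] [Ring R]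
    [NoZeroDivisors R] {ζ : R} (hζ : ζ ≠ 1) {b : G → R} (g : G)
    (h : ∀ j, b j * ζ = b (j - g)) : ∑ j, b j = 0 := by
  have hfix : (∑ j, b j) * (ζ - 1) = 0 := by
    rw [mul_sub_one, Finset.sum_mul, sub_eq_zero]
    simp_rw [h]
    exact Equiv.sum_comp (Equiv.subRight g) b
  exact (mul_eq_zero.mp hfix).resolve_right (sub_ne_zero.mpr hζ)

namespace Complex

theorem im_ne_zero_of_sq_add_self_add_one_eq_zero {ζ : ℂ} (hζ : ζ ^ 2 + ζ + 1 = 0) :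
    ζ.im ≠ 0 := by
  intro him
  have hre := congrArg re hζ
  simp only [sq, add_re, mul_re, him, mul_zero, sub_zero, one_re, zero_re] at hre
  nlinarith [sq_nonneg (ζ.re + 1 / 2)]

theorem ne_zero_of_sq_add_self_add_one_eq_zero {ζ : ℂ} (hζ : ζ ^ 2 + ζ + 1 = 0) :
    ζ ≠ 0 := by
  rintro rfl
  norm_num at hζ

theorem ne_one_of_sq_add_self_add_one_eq_zero {ζ : ℂ} (hζ : ζ ^ 2 + ζ + 1 = 0) :
    ζ ≠ 1 := by
  rintro rfl
  norm_num at hζ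

theorem eq_zero_of_ofReal_mul_eq_ofReal {ζ : ℂ} (hζ : ζ.im ≠ 0) {x y : ℝ} (h : x * ζ = y) :
    x = 0 := by
  have him := congrArg im h
  simp only [mul_im, ofReal_re, ofReal_im, zero_mul, add_zero] at him
  exact (mul_eq_zero.mp him).resolve_right hζ

theorem re_conj_mul_ofReal_mul_I_mul (t : ℝ) (d : ℂ) : (conj d * (t * I * d)).re = 0 := by
  simp only [mul_re, mul_im, conj_re, conj_im, ofReal_re, ofReal_im, I_re, I_im]
  ring

theorem exists_ofReal_mul_I_mul_of_re_conj_mul_eq_zero {d p : ℂ} (hd : d ≠ 0)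
    (h : (conj d * p).re = 0) : ∃ t : ℝ, p = t * I * d := by
  refine ⟨(p / d).im, ?_⟩
  have hre : (p / d).re = 0 := by
    rw [div_re, ← add_div, div_eq_zero_iff]
    left
    simpa [mul_re, mul_comm] using h
  conv_lhs => rw [← div_mul_cancel₀ p hd, ← re_add_im (p / d), hre]
  simp

end Complex

theorem dForce_of_re_eq_zero {w wdot : ℝ} {d dPhi : ℂ} (h : (conj d * dPhi).re = 0) :
    dForce w wdot d dPhi = wdot * d + w * dPhi := by
  simp [dForce, h]

theorem dForce_ofReal_mul_I_mul (w wdot t : ℝ) (d : ℂ) :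
    dForce w wdot d (t * I * d) = (wdot + t * w * I) * d := by
  rw [dForce_of_re_eq_zero (re_conj_mul_ofReal_mul_I_mul t d)]
  ring

-- `D F_{(Id,a)}(Ψ, ȧ) = 0`
def IsForceEquilibrium (a adot : ZMod 3 → ℝ) (z Ψ : ZMod 3 → ℂ) : Prop :=
  ∀ j : ZMod 3,
    dForce (a j) (adot j) (z (j + 1) - z j) (Ψ (j + 1) - Ψ j)
      + dForce (a (j - 1)) (adot (j - 1)) (z (j - 1) - z j) (Ψ (j - 1) - Ψ j) = 0

-- `D L_{Id}(Ψ) = 0`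
def IsInfinitesimalIsometry (z Ψ : ZMod 3 → ℂ) : Prop :=
  ∀ j : ZMod 3, ((starRingEnd ℂ (z j - z (j + 1))) * (Ψ j - Ψ (j + 1))).re = 0

section EquilateralTriangle

variable {ζ : ℂ} {z Ψ : ZMod 3 → ℂ}

theorem sub_one_mul_ne_zero_of_rotation (hζ : ζ ^ 2 + ζ + 1 = 0)
    (hrot : ∀ j, z (j + 1) = ζ * z j) (hz0 : z 0 ≠ 0) (j : ZMod 3) : (ζ - 1) * z j ≠ 0 :=
  mul_ne_zero (sub_ne_zero.mpr (ne_one_of_sq_add_self_add_one_eq_zero hζ))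
    (ZMod.apply_ne_zero_of_apply_add_one_eq_mul (ne_zero_of_sq_add_self_add_one_eq_zero hζ)
      hrot hz0 j)

theorem exists_infinitesimal_rotation (hζ : ζ ^ 2 + ζ + 1 = 0) (hrot : ∀ j, z (j + 1) = ζ * z j)
    (hz0 : z 0 ≠ 0) (hΨ : IsInfinitesimalIsometry z Ψ) :
    ∃ t : ℝ, ∀ j, Ψ (j + 1) - Ψ j = t * I * (z (j + 1) - z j) := by
  have hedge (j : ZMod 3) : z (j + 1) - z j ≠ 0 := by
    rw [hrot, ← sub_one_mul]
    exact sub_one_mul_ne_zero_of_rotation hζ hrot hz0 j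
  have hΨ' (j : ZMod 3) : (conj (z (j + 1) - z j) * (Ψ (j + 1) - Ψ j)).re = 0 := by
    have := hΨ j
    rwa [← neg_sub (z (j + 1)), ← neg_sub (Ψ (j + 1)), map_neg, neg_mul_neg] at this
  choose t ht using fun j => exists_ofReal_mul_I_mul_of_re_conj_mul_eq_zero (hedge j) (hΨ' j)
  have hclosed : ∑ j, (Ψ (j + 1) - Ψ j) = 0 := by
    rw [Finset.sum_sub_distrib, sub_eq_zero]
    exact Equiv.sum_comp (Equiv.addRight 1) Ψ
  have h1 : z 1 = ζ * z 0 := by simpa using hrot 0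
  have h2 : z 2 = ζ * z 1 := by rw [← one_add_one_eq_two]; exact hrot 1
  simp only [ht, ZMod.sum_three, hrot, h2, h1] at hclosed
  have hcoef : ((t 0 - t 2 : ℝ) : ℂ) + (t 1 - t 2 : ℝ) * ζ = 0 := by
    have hfac : I * ((ζ - 1) * z 0) ≠ 0 :=
      mul_ne_zero I_ne_zero (sub_one_mul_ne_zero_of_rotation hζ hrot hz0 0)
    refine (mul_eq_zero.mp ?_).resolve_left hfac
    push_cast
    linear_combination hclosed - I * (ζ - 1) * z 0 * t 2 * hζ
  have h12 : t 1 = t 2 := sub_eq_zero.mp <| eq_zero_of_ofReal_mul_eq_ofReal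
    (im_ne_zero_of_sq_add_self_add_one_eq_zero hζ) (y := t 2 - t 0)
      (by push_cast at hcoef ⊢; linear_combination hcoef)
  have h02 : t 0 = t 2 := by simpa [h12, sub_eq_zero] using hcoef
  refine ⟨t 2, fun j => ?_⟩
  have htj : t j = t 2 := by fin_cases j; exacts [h02, h12, rfl]
  rw [ht j, htj]

theorem isForceEquilibrium_iff (hζ : ζ ^ 2 + ζ + 1 = 0) (hrot : ∀ j, z (j + 1) = ζ * z j)
    (hz0 : z 0 ≠ 0) {a adot : ZMod 3 → ℝ} {t : ℝ}
    (ht : ∀ j, Ψ (j + 1) - Ψ j = t * I * (z (j + 1) - z j)) :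
    IsForceEquilibrium a adot z Ψ ↔
      ∀ j, (adot j + t * a j * I) * ζ = adot (j - 1) + t * a (j - 1) * I := by
  refine forall_congr' fun j => ?_
  have hz : z j = ζ * z (j - 1) := by simpa using hrot (j - 1)
  have hΨ : Ψ (j - 1) - Ψ j = t * I * (z (j - 1) - z j) := by
    have h := ht (j - 1)
    rw [sub_add_cancel] at h
    linear_combination -h
  rw [ht, hΨ, dForce_ofReal_mul_I_mul, dForce_ofReal_mul_I_mul, hrot, hz,
    ← sub_eq_zero (a := _ * ζ)]
  constructor
  · intro h
    refine (mul_eq_zero.mp ?_).resolve_left (sub_one_mul_ne_zero_of_rotation hζ hrot hz0 (j - 1))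
    linear_combination h
  · intro h
    linear_combination (ζ - 1) * z (j - 1) * h

theorem const_and_eq_zero_of_sum_ne_zero (hζ : ζ ^ 2 + ζ + 1 = 0)
    (hrot : ∀ j, z (j + 1) = ζ * z j) (hz0 : z 0 ≠ 0) {a adot : ZMod 3 → ℝ}
    (hσ : a 0 + a 1 + a 2 ≠ 0) (hF : IsForceEquilibrium a adot z Ψ)
    (hL : IsInfinitesimalIsometry z Ψ) : (∃ e, ∀ j, Ψ j = e) ∧ ∀ j, adot j = 0 := by
  obtain ⟨t, ht⟩ := exists_infinitesimal_rotation hζ hrot hz0 hL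
  have hb := (isForceEquilibrium_iff hζ hrot hz0 ht).mp hF
  have hsum :=
    Fintype.sum_eq_zero_of_mul_eq_sub (ne_one_of_sq_add_self_add_one_eq_zero hζ) 1 hb
  have ht0 : t = 0 := by
    have him := congrArg im hsum
    simp only [ZMod.sum_three, add_im, ofReal_im, mul_im, mul_re, ofReal_re, mul_zero, sub_zero,
      I_im, mul_one, zero_mul, add_zero, I_re, zero_add, zero_im] at him
    refine (mul_eq_zero.mp ?_).resolve_right hσ
    linear_combination him
  subst ht0
  refine ⟨⟨Ψ 0, fun j => ?_⟩, fun j => ?_⟩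
  · induction j using ZMod.induction_add_one with
    | zero => rfl
    | succ j ih => simpa [ih] using congrArg (· + Ψ j) (ht j)
  · refine eq_zero_of_ofReal_mul_eq_ofReal (im_ne_zero_of_sq_add_self_add_one_eq_zero hζ)
      (y := adot (j - 1)) ?_
    simpa using hb j

theorem exists_nonconst_of_sum_eq_zero (hζ : ζ ^ 2 + ζ + 1 = 0)
    (hrot : ∀ j, z (j + 1) = ζ * z j) (hz0 : z 0 ≠ 0) {a : ZMod 3 → ℝ}
    (hσ : a 0 + a 1 + a 2 = 0) :
    ∃ (Ψ : ZMod 3 → ℂ) (adot : ZMod 3 → ℝ), IsForceEquilibrium a adot z Ψ ∧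
      IsInfinitesimalIsometry z Ψ ∧ ¬ ∃ e, ∀ j, Ψ j = e := by
  have him := im_ne_zero_of_sq_add_self_add_one_eq_zero hζ
  -- `Im (b j) = a j`, and `b j * ζ = b (j - 1)` reduces to `a (j - 1) + a j + a (j + 1) = 0`.
  set b : ZMod 3 → ℂ := fun j => (a j * ζ - a (j + 1)) / ζ.im
  have hb (j : ZMod 3) : ((b j).re : ℂ) + (1 : ℝ) * a j * I = b j := by
    refine ext ?_ ?_ <;> field_simp <;> simp [b, him]
  refine ⟨fun j => I * z j, fun j => (b j).re, ?_, fun j => ?_, ?_⟩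
  · refine (isForceEquilibrium_iff hζ hrot hz0 (t := 1) fun j => by push_cast; ring).mpr
      fun j => ?_
    have hσj : (a (j - 1) : ℂ) + a j + a (j + 1) = 0 := by
      exact_mod_cast (ZMod.apply_sub_one_add_apply_add_apply_add_one a j).trans hσ
    rw [hb, hb]
    simp only [b, sub_add_cancel]
    rw [div_mul_eq_mul_div, div_left_inj' (ofReal_ne_zero.mpr him)]
    linear_combination a j * hζ - ζ * hσj
  · simpa [← mul_sub] using re_conj_mul_ofReal_mul_I_mul 1 (z j - z (j + 1))
  · rintro ⟨e, he⟩
    have h10 : z 1 = z 0 := mul_left_cancel₀ I_ne_zero ((he 1).trans (he 0).symm)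
    have : ζ = 1 := mul_right_cancel₀ hz0 (by simpa [h10] using (hrot 0).symm)
    exact ne_one_of_sq_add_self_add_one_eq_zero hζ this

end EquilateralTriangle

theorem triangle_flexible_iff_general
    (ζ : ℂ) (hζ : ζ = Complex.exp (2 * Real.pi * Complex.I / 3))
    (z : ZMod 3 → ℂ)
    (hz : ∀ j : ZMod 3, z j = ζ ^ (j.val) / (Real.sqrt 3 : ℂ))
    (a : ZMod 3 → ℝ) :
    (∀ (Ψ : ZMod 3 → ℂ) (adot : ZMod 3 → ℝ),
      (∀ j : ZMod 3,
        dForce (a j) (adot j) (z (j + 1) - z j) (Ψ (j + 1) - Ψ j)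
          + dForce (a (j - 1)) (adot (j - 1)) (z (j - 1) - z j)
              (Ψ (j - 1) - Ψ j) = 0) →
      (∀ j : ZMod 3,
        ((starRingEnd ℂ (z j - z (j + 1))) * (Ψ j - Ψ (j + 1))).re = 0) →
      ((∃ e : ℂ, ∀ j, Ψ j = e) ∧ ∀ j, adot j = 0))
    ↔ a 0 + a 1 + a 2 ≠ 0 := by
  have hprim : IsPrimitiveRoot ζ 3 := by
    simpa [hζ] using Complex.isPrimitiveRoot_exp 3 (by norm_num)
  have hcyc : ζ ^ 2 + ζ + 1 = 0 := by
    have h := hprim.geom_sum_eq_zero (by norm_num)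
    simp only [Finset.sum_range_succ, Finset.sum_range_zero, pow_zero, pow_one, zero_add] at h
    linear_combination h
  have hrot (j : ZMod 3) : z (j + 1) = ζ * z j := by
    rw [hz, hz, pow_zmod_val_add_one hprim.pow_eq_one, mul_div_assoc', mul_comm]
  have hz0 : z 0 ≠ 0 := by simp [hz]
  constructor
  · intro hker hσ
    obtain ⟨Ψ, adot, hF, hL, hΨ⟩ := exists_nonconst_of_sum_eq_zero hcyc hrot hz0 hσ
    exact hΨ (hker Ψ adot hF hL).1
  · exact fun hσ Ψ adot hF hL => const_and_eq_zero_of_sum_ne_zero hcyc hrot hz0 hσ hF hL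

/-- For the unit equilateral triangle with vertices `z j = ζ^j/√3`
(`ζ = e^{2πi/3}`) and weights `a` on its three edges, the map
`Λ = (D F_{(Id,a)}, D L_{Id})` has rank `7` (equivalently, its kernel is
reduced to the translations) if and only if
`a_{[z₀,z₁]} + a_{[z₁,z₂]} + a_{[z₂,z₀]} ≠ 0`. -/
theorem triangle_flexible_iff
    (ζ : ℂ) (hζ : ζ = Complex.exp (2 * Real.pi * Complex.I / 3))
    (z : ZMod 3 → ℂ)
    (hz : ∀ j : ZMod 3, z j = ζ ^ (j.val) / (Real.sqrt 3 : ℂ))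
    (a : ZMod 3 → ℝ) (ha : ∀ j, a j ≠ 0) :
    (∀ (Ψ : ZMod 3 → ℂ) (adot : ZMod 3 → ℝ),
      (∀ j : ZMod 3,
        dForce (a j) (adot j) (z (j + 1) - z j) (Ψ (j + 1) - Ψ j)
          + dForce (a (j - 1)) (adot (j - 1)) (z (j - 1) - z j)
              (Ψ (j - 1) - Ψ j) = 0) →
      (∀ j : ZMod 3,
        ((starRingEnd ℂ (z j - z (j + 1))) * (Ψ j - Ψ (j + 1))).re = 0) →
      ((∃ e : ℂ, ∀ j, Ψ j = e) ∧ ∀ j, adot j = 0))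
    ↔ a 0 + a 1 + a 2 ≠ 0 :=
  triangle_flexible_iff_general ζ hζ z hz a
end

section
/- For the balanced wheel network (k ≥ 3 with weights 1 on rim edges and -2 sin(π/k) on spokes), the linear map ȧ ↦ D_a F_{(Id,a)}(ȧ) = (∑_{q∈V_p} ȧ_{[p,q]}(q-p)/|q-p|)_p from ℝ^{2k} to ℂ^{k+1} has rank 2k - 1; equivalently its kernel is one-dimensional, spanned by a. -/
/-!
Put `θ = π / k`. The rim vertices `ξ ^ j` are the values of an additive character `ψ` of `ZMod k`,
so the unit vectors from `ψ j` towards `ψ (j + 1)` and `ψ (j - 1)` are `ψ j * u` and `ψ j * conj u`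
with `u = i e^{iθ} = -sin θ + i cos θ`. Dividing the equation at rim vertex `j` by `ψ j`, its
imaginary part is `cos θ (ar j - ar (j - 1)) = 0`, and `cos θ ≠ 0` because `k ≥ 3`: the rim weights
are constant, and the real part then makes every spoke weight `-2 sin θ` times that constant.
For such weights the equation at the center holds because the `k`-th roots of unity sum to zero.
-/

open Complex ComplexConjugate

theorem mul_sub_self_div_norm {z : ℂ} (hz : ‖z‖ = 1) (ζ : ℂ) :
    (z * ζ - z) / (‖z * ζ - z‖ : ℂ) = z * ((ζ - 1) / ‖ζ - 1‖) := by
  rw [show z * ζ - z = z * (ζ - 1) by ring, norm_mul, hz, one_mul, mul_div_assoc]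

theorem conj_sub_one_div_norm (ζ : ℂ) :
    (conj ζ - 1) / (‖conj ζ - 1‖ : ℂ) = conj ((ζ - 1) / ‖ζ - 1‖) := by
  have hnorm : ‖conj ζ - 1‖ = ‖ζ - 1‖ := by rw [← norm_conj, map_sub, conj_conj, map_one]
  rw [hnorm, map_div₀, map_sub, map_one, conj_ofReal]

theorem exp_two_mul_I_sub_one_div_norm {θ : ℝ} (hθ : 0 < Real.sin θ) :
    (exp (2 * θ * I) - 1) / (‖exp (2 * θ * I) - 1‖ : ℂ) = I * exp (θ * I) := by
  have hfactor : exp (2 * θ * I) - 1 = exp (θ * I) * (2 * Real.sin θ * I) := by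
    have hsq : exp (2 * θ * I) = exp (θ * I) * exp (θ * I) := by rw [← exp_add]; ring_nf
    have hinv : exp (θ * I) * exp (-θ * I) = 1 := by rw [← exp_add]; simp
    rw [ofReal_sin, Complex.sin, hsq]
    linear_combination hinv - (exp (θ * I) * exp (-θ * I) - exp (θ * I) * exp (θ * I)) * I_sq
  have hnorm : ‖exp (2 * θ * I) - 1‖ = 2 * Real.sin θ := by
    rw [hfactor, norm_mul, norm_mul, norm_mul, norm_exp_ofReal_mul_I, norm_I, norm_real,
      Real.norm_of_nonneg hθ.le, Complex.norm_two]
    ring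
  have hs : Complex.sin θ ≠ 0 := by rw [← ofReal_sin]; exact_mod_cast hθ.ne'
  rw [hnorm, hfactor]
  push_cast
  field_simp

theorem Real.sin_pi_div_natCast_pos {k : ℕ} (hk : 1 < k) : 0 < Real.sin (Real.pi / k) :=
  Real.sin_pos_of_pos_of_lt_pi (by positivity) (div_lt_self Real.pi_pos (by exact_mod_cast hk))

theorem Real.cos_pi_div_natCast_pos {k : ℕ} (hk : 2 < k) : 0 < Real.cos (Real.pi / k) := by
  have hk0 : (0 : ℝ) < k := by exact_mod_cast (by omega : 0 < k)
  exact Real.cos_pos_of_mem_Ioo ⟨by linarith [Real.pi_pos, div_pos Real.pi_pos hk0],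
    div_lt_div_of_pos_left Real.pi_pos two_pos (by exact_mod_cast hk)⟩

theorem exp_two_pi_I_div_natCast_sub_one_div_norm {k : ℕ} (hk : 1 < k) :
    (exp (2 * Real.pi * I / k) - 1) / (‖exp (2 * Real.pi * I / k) - 1‖ : ℂ)
      = I * exp ((Real.pi / k : ℝ) * I) := by
  rw [← exp_two_mul_I_sub_one_div_norm (Real.sin_pi_div_natCast_pos hk)]
  push_cast
  ring_nf

theorem neg_ofReal_add_mul_add_mul_conj_eq_zero_iff {u : ℂ} (hu : u.im ≠ 0) (x y z : ℝ) :
    -(x : ℂ) + y * u + z * conj u = 0 ↔ z = y ∧ x = 2 * u.re * y := by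
  simp only [Complex.ext_iff, add_re, add_im, neg_re, neg_im, re_ofReal_mul, im_ofReal_mul,
    ofReal_re, ofReal_im, conj_re, conj_im, zero_re, zero_im]
  constructor
  · rintro ⟨hre, him⟩
    have hzy : z = y := by
      have : (y - z) * u.im = 0 := by linarith
      linarith [(mul_eq_zero.mp this).resolve_right hu]
    subst hzy
    exact ⟨rfl, by linarith⟩
  · rintro ⟨rfl, rfl⟩
    constructor <;> ring

theorem ZMod.apply_eq_apply_zero_of_forall_apply_sub_one {k : ℕ} {α : Type*} {f : ZMod k → α}
    (h : ∀ j, f (j - 1) = f j) (j : ZMod k) : f j = f 0 := by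
  obtain ⟨n, rfl⟩ := ZMod.intCast_surjective j
  induction n using Int.induction_on with
  | zero => simp
  | succ i ih => rw [← ih, ← h ((i + 1 : ℤ) : ZMod k)]; push_cast; ring_nf
  | pred i ih => rw [← ih, ← h ((-i : ℤ) : ZMod k)]; push_cast; ring_nf

namespace AddChar

variable {G : Type*} [AddCommGroup G] [Finite G]

theorem rim_balance_eq_zero_iff (ψ : AddChar G ℂ) (g d : G) (x y z : ℝ) :
    (x : ℂ) * (0 - ψ g) / (‖0 - ψ g‖ : ℂ)
        + (y : ℂ) * (ψ (g + d) - ψ g) / (‖ψ (g + d) - ψ g‖ : ℂ)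
        + (z : ℂ) * (ψ (g - d) - ψ g) / (‖ψ (g - d) - ψ g‖ : ℂ) = 0
      ↔ -(x : ℂ) + y * ((ψ d - 1) / ‖ψ d - 1‖) + z * conj ((ψ d - 1) / ‖ψ d - 1‖) = 0 := by
  have hg : ‖ψ g‖ = 1 := norm_apply ψ g
  have hg0 : ψ g ≠ 0 := norm_ne_zero_iff.mp (by rw [hg]; exact one_ne_zero)
  rw [map_add_eq_mul, map_sub_eq_div, div_eq_mul_inv _ (ψ d), inv_apply_eq_conj,
    mul_div_assoc, mul_div_assoc, mul_div_assoc, mul_sub_self_div_norm hg,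
    mul_sub_self_div_norm hg, conj_sub_one_div_norm, zero_sub, norm_neg, hg, ofReal_one, div_one]
  conv_rhs => rw [← mul_right_inj' hg0, mul_zero]
  ring_nf

end AddChar

/-- For the balanced wheel network (`k ≥ 3`, rim vertices `w j = ξ^j` with
`ξ = e^{2πi/k}`, center `0`, weight `1` on rim edges and `-2 sin(π/k)` on
spokes), the linear map `ȧ ↦ D_a F_{(Id,a)}(ȧ)` from `ℝ^{2k}` (spoke weight
perturbations `ȧs` and rim weight perturbations `ȧr`) to `ℂ^{k+1}` has rank
`2k - 1`; equivalently its kernel is one-dimensional, spanned by the weight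
vector `a` itself. -/
theorem wheel_weight_differential_kernel
    (k : ℕ) (hk : 3 ≤ k) [NeZero k]
    (ξ : ℂ) (hξ : ξ = Complex.exp (2 * Real.pi * Complex.I / k))
    (w : ZMod k → ℂ) (hw : ∀ j : ZMod k, w j = ξ ^ (j.val)) :
    ∀ (as ar : ZMod k → ℝ),
      ((∑ j : ZMod k, (as j : ℂ) * (w j - 0) / (‖w j - 0‖ : ℂ) = 0)
        ∧ (∀ j : ZMod k,
            (as j : ℂ) * (0 - w j) / (‖0 - w j‖ : ℂ)
              + (ar j : ℂ) * (w (j + 1) - w j) /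
                  (‖w (j + 1) - w j‖ : ℂ)
              + (ar (j - 1) : ℂ) * (w (j - 1) - w j) /
                  (‖w (j - 1) - w j‖ : ℂ) = 0))
      ↔ ∃ c : ℝ, (∀ j, as j = c * (-2 * Real.sin (Real.pi / k)))
          ∧ (∀ j, ar j = c * 1) := by
  intro as ar
  have hprim : IsPrimitiveRoot ξ k := hξ ▸ isPrimitiveRoot_exp k (NeZero.ne k)
  set ψ := AddChar.zmodChar k hprim.pow_eq_one
  obtain rfl : w = ψ := funext hw
  have hψ1 : ψ 1 = ξ := by simpa using AddChar.zmodChar_apply' hprim.pow_eq_one 1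
  have hu : (ψ 1 - 1) / (‖ψ 1 - 1‖ : ℂ) = I * exp ((Real.pi / k : ℝ) * I) := by
    rw [hψ1, hξ, exp_two_pi_I_div_natCast_sub_one_div_norm (by omega)]
  have hu_re : ((ψ 1 - 1) / (‖ψ 1 - 1‖ : ℂ)).re = -Real.sin (Real.pi / k) := by
    simp only [hu, I_mul_re, exp_ofReal_mul_I_im]
  have hu_im : ((ψ 1 - 1) / (‖ψ 1 - 1‖ : ℂ)).im ≠ 0 := by
    simpa only [hu, I_mul_im, exp_ofReal_mul_I_re] using (Real.cos_pi_div_natCast_pos hk).ne'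
  have hrim (j : ZMod k) :=
    (AddChar.rim_balance_eq_zero_iff ψ j 1 (as j) (ar j) (ar (j - 1))).trans
      (neg_ofReal_add_mul_add_mul_conj_eq_zero_iff hu_im _ _ _)
  have hsum : ∑ j, ψ j = 0 := AddChar.sum_eq_zero_of_ne_one <|
    (AddChar.zmod_char_ne_one_iff k ψ).mpr (hψ1 ▸ hprim.ne_one (by omega))
  constructor
  · rintro ⟨-, hv⟩
    have har := ZMod.apply_eq_apply_zero_of_forall_apply_sub_one fun j => ((hrim j).1 (hv j)).1
    refine ⟨ar 0, fun j => ?_, fun j => by rw [har j, mul_one]⟩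
    rw [((hrim j).1 (hv j)).2, har j, hu_re]
    ring
  · rintro ⟨c, has, har⟩
    refine ⟨?_, fun j => (hrim j).2 ⟨by rw [har, har], by rw [has, har, hu_re]; ring⟩⟩
    simp [AddChar.norm_apply, has, ← Finset.mul_sum, hsum]
end

section
/- For the balanced wheel network with k ≥ 3, k ≠ 6, the torsion vector T := (|p-q| ln|a_{[p,q]}|)_{[p,q]∈E} is not in the image of D L_{Id}: there is no Φ̇ : V → ℂ with ⟨p - q, Φ̇_p - Φ̇_q⟩_ℝ / |p-q| = |p - q| ln|a_{[p,q]}| for all edges. (In particular the wheel network is closable.) -/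
/-!
The weights of the balanced wheel (`1` on rim edges, `-2 sin(π/k)` on spokes) form an
equilibrium stress: at a rim vertex `w` the two rim forces add up to
`w (2 - ξ - ξ̄) / |1 - ξ| = |1 - ξ| w`, which the spoke cancels since `|1 - ξ| = 2 sin(π/k)`.
Hence the stress is orthogonal to the image of `D L_{Id}`. Pairing it with the torsion vector
gives `-2k sin(π/k) ln(2 sin(π/k))`, which vanishes only for `k = 6`.
-/

open ComplexConjugate Real

theorem pow_val_add_one {M : Type*} [Monoid M] {x : M} {k : ℕ} [NeZero k] (hx : x ^ k = 1)
    (j : ZMod k) : x ^ (j + 1).val = x * x ^ j.val := by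
  rw [ZMod.val_add, ← pow_eq_pow_mod _ hx, ZMod.val_one_eq_one_mod, pow_add,
    ← pow_eq_pow_mod _ hx, pow_one, (Commute.self_pow x j.val).eq]

theorem Real.sin_pi_div_natCast_eq_half_iff {k : ℕ} (hk : 2 ≤ k) :
    sin (π / k) = 1 / 2 ↔ k = 6 := by
  refine ⟨fun h => ?_, fun h => by subst h; exact_mod_cast sin_pi_div_six⟩
  have hk0 : (0 : ℝ) < k := by positivity
  have hk2 : (2 : ℝ) ≤ k := by exact_mod_cast hk
  have mem_Icc {x : ℝ} (hx : 2 ≤ x) : π / x ∈ Set.Icc (-(π / 2)) (π / 2) :=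
    ⟨by linarith [div_pos pi_pos (by linarith : (0 : ℝ) < x), pi_pos],
      div_le_div_of_nonneg_left pi_pos.le two_pos hx⟩
  have hπ : π / k = π / 6 :=
    injOn_sin (mem_Icc hk2) (mem_Icc (by norm_num)) (h.trans sin_pi_div_six.symm)
  rw [div_eq_div_iff hk0.ne' (by norm_num), mul_right_inj' pi_ne_zero] at hπ
  exact_mod_cast hπ.symm

theorem Real.log_abs_neg_two_mul_sin_pi_div_natCast_ne_zero {k : ℕ} (hk : 2 ≤ k)
    (hk6 : k ≠ 6) :
    log |-2 * sin (π / k)| ≠ 0 := by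
  have hsin : 0 < sin (π / k) := by
    refine sin_pos_of_pos_of_lt_pi (by positivity) (div_lt_self pi_pos ?_)
    exact_mod_cast hk
  rw [abs_of_neg (by linarith)]
  refine log_ne_zero_of_pos_of_ne_one (by linarith) fun h => ?_
  exact hk6 ((sin_pi_div_natCast_eq_half_iff hk).mp (by linarith))

section WheelStress

variable {k : ℕ} {ξ : ℂ} {w : ZMod k → ℂ}

theorem conj_sub_mul_sub_eq_of_rotation (hξ : ‖ξ‖ = 1) (hw : ∀ j, w (j + 1) = ξ * w j)
    (Φc : ℂ) (Φ : ZMod k → ℂ) (j : ZMod k) :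
    conj (w j - w (j + 1)) * (Φ j - Φ (j + 1)) =
      (1 - conj ξ) * (conj (0 - w j) * (Φc - Φ j)) +
        (1 - ξ) * (conj (0 - w (j + 1)) * (Φc - Φ (j + 1))) := by
  have hξξ : conj ξ * ξ = 1 := by rw [Complex.conj_mul', hξ]; norm_num
  rw [hw j]
  simp only [map_sub, map_mul, map_zero]
  linear_combination (conj (w j) * (Φ (j + 1) - Φc)) * hξξ

/-- The equilibrium-stress identity of the wheel, multiplied by the rim length `‖1 - ξ‖`. -/
theorem sum_conj_sub_mul_sub_eq_of_rotation [NeZero k] (hξ : ‖ξ‖ = 1)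
    (hw : ∀ j, w (j + 1) = ξ * w j) (Φc : ℂ) (Φ : ZMod k → ℂ) :
    ∑ j, conj (w j - w (j + 1)) * (Φ j - Φ (j + 1)) =
      ((‖1 - ξ‖ ^ 2 : ℝ) : ℂ) * ∑ j, conj (0 - w j) * (Φc - Φ j) := by
  set u : ZMod k → ℂ := fun j => conj (0 - w j) * (Φc - Φ j)
  have hshift : ∑ j, u (j + 1) = ∑ j, u j :=
    Fintype.sum_equiv (Equiv.addRight 1) _ _ fun _ => rfl
  have hnorm : ((‖1 - ξ‖ ^ 2 : ℝ) : ℂ) = (1 - conj ξ) + (1 - ξ) := by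
    rw [Complex.ofReal_pow, ← Complex.mul_conj', map_sub, map_one]
    have hξξ : ξ * conj ξ = 1 := by rw [Complex.mul_conj', hξ]; norm_num
    linear_combination hξξ
  simp_rw [conj_sub_mul_sub_eq_of_rotation hξ hw Φc Φ, Finset.sum_add_distrib,
    ← Finset.mul_sum]
  rw [hshift, hnorm, add_mul]

end WheelStress

/-- For the balanced wheel network with `k ≥ 3`, `k ≠ 6` (rim vertices
`w j = ξ^j`, `ξ = e^{2πi/k}`, center `0`, weight `1` on rim edges, weight
`-2 sin(π/k)` on spokes), the torsion vector
`T = (|p-q| ln|a_{[p,q]}|)_{[p,q]∈E}` is not in the image of `D L_{Id}`: there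
is no perturbation `(Φc, Φ)` of the vertices with
`⟨p - q, Φ̇_p - Φ̇_q⟩_ℝ / |p-q| = |p - q| ln|a_{[p,q]}|` for all edges.
In particular the wheel network is closable. -/
theorem wheel_network_closable
    (k : ℕ) (hk : 3 ≤ k) (hk6 : k ≠ 6) [NeZero k]
    (ξ : ℂ) (hξ : ξ = Complex.exp (2 * Real.pi * Complex.I / k))
    (w : ZMod k → ℂ) (hw : ∀ j : ZMod k, w j = ξ ^ (j.val)) :
    ¬ ∃ (Φc : ℂ) (Φ : ZMod k → ℂ),
      (∀ j : ZMod k,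
        ((starRingEnd ℂ (0 - w j)) * (Φc - Φ j)).re / ‖0 - w j‖
          = ‖0 - w j‖ * Real.log |(-2 * Real.sin (Real.pi / k))|) ∧
      (∀ j : ZMod k,
        ((starRingEnd ℂ (w j - w (j + 1))) * (Φ j - Φ (j + 1))).re /
            ‖w j - w (j + 1)‖
          = ‖w j - w (j + 1)‖ * Real.log |(1 : ℝ)|) := by
  rintro ⟨Φc, Φ, hspoke, hrim⟩
  have hprim : IsPrimitiveRoot ξ k := hξ ▸ Complex.isPrimitiveRoot_exp k (NeZero.ne k)
  have hξ_norm : ‖ξ‖ = 1 := hprim.norm'_eq_one (NeZero.ne k)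
  have hw_succ (j : ZMod k) : w (j + 1) = ξ * w j := by
    rw [hw, hw, pow_val_add_one hprim.pow_eq_one]
  set L := Real.log |-2 * Real.sin (Real.pi / k)|
  have hspoke_re (j : ZMod k) : (conj (0 - w j) * (Φc - Φ j)).re = L := by
    have hnorm : ‖0 - w j‖ = 1 := by rw [zero_sub, norm_neg, hw, norm_pow, hξ_norm, one_pow]
    have h := hspoke j
    rwa [hnorm, div_one, one_mul] at h
  have hrim_re (j : ZMod k) : (conj (w j - w (j + 1)) * (Φ j - Φ (j + 1))).re = 0 := by
    rcases div_eq_zero_iff.mp ((hrim j).trans (by simp)) with h | h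
    · exact h
    · simp [norm_eq_zero.mp h]
  have hstress := congrArg Complex.re (sum_conj_sub_mul_sub_eq_of_rotation hξ_norm hw_succ Φc Φ)
  simp only [Complex.re_sum, hrim_re, Complex.re_ofReal_mul, hspoke_re, Finset.sum_const,
    Finset.card_univ, ZMod.card, nsmul_eq_mul, mul_zero] at hstress
  have h_one_sub_ξ : ‖1 - ξ‖ ≠ 0 := by
    rw [norm_ne_zero_iff, sub_ne_zero]; exact (hprim.ne_one (by omega)).symm
  have hL : L ≠ 0 := Real.log_abs_neg_two_mul_sin_pi_div_natCast_ne_zero (by omega) hk6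
  have hk0 : (k : ℝ) ≠ 0 := Nat.cast_ne_zero.mpr (NeZero.ne k)
  exact mul_ne_zero (pow_ne_zero 2 h_one_sub_ξ) (mul_ne_zero hk0 hL) hstress.symm
end

section
/- For the network N_V with vertices {0, tan θ, -tan θ, i, -i} (0 < θ < π/4), edges from 0 to each of the four outer vertices and the four outer edges [tan θ, i], [i, -tan θ], [-tan θ, -i], [-i, tan θ], with weights a_{[0,±tan θ]} = -2 sin θ, a_{[0,±i]} = -2 cos θ, and weight 1 on the four outer edges, the network is balanced: the force ∑_{q∈V_p} a_{[p,q]}(q-p)/|q-p| vanishes at every vertex p. -/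
open Complex

/-! Each outer vertex `p` has two neighbours `q₁ = -q₂` at a common distance `R`, so the two
unit-weight outer edges pull with `-2p/R`, which the spoke to `0` cancels exactly when its
weight is `-2‖p‖/R`. Since `|±i ∓ tan θ| = 1/cos θ`, this weight is `-2 tan θ cos θ = -2 sin θ`
at `±tan θ` and `-2 cos θ` at `±i`. At `0` the spokes cancel in opposite pairs. -/

lemma force_add_force_neg_eq_zero (w z : ℂ) :
    w * (z - 0) / (‖z - 0‖ : ℂ) + w * (-z - 0) / (‖-z - 0‖ : ℂ) = 0 := by
  rw [sub_zero, sub_zero, norm_neg]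
  ring

lemma force_eq_zero_of_neg_neighbours {p q₁ q₂ : ℂ} {w R : ℝ} (h₁ : ‖q₁ - p‖ = R)
    (h₂ : ‖q₂ - p‖ = R) (hq : q₁ + q₂ = 0) (hw : w * R = -2 * ‖p‖) :
    (w : ℂ) * (0 - p) / (‖0 - p‖ : ℂ) + 1 * (q₁ - p) / (‖q₁ - p‖ : ℂ)
      + 1 * (q₂ - p) / (‖q₂ - p‖ : ℂ) = 0 := by
  rcases eq_or_ne p 0 with rfl | hp
  · simp only [sub_zero, norm_zero, ofReal_zero, div_zero, mul_zero, zero_add, one_mul] at h₁ h₂ ⊢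
    rw [h₁, h₂, ← add_div, hq, zero_div]
  have hp' : (‖p‖ : ℂ) ≠ 0 := ofReal_ne_zero.mpr (norm_ne_zero_iff.mpr hp)
  have hR : (R : ℂ) ≠ 0 := by
    refine ofReal_ne_zero.mpr fun hR ↦ hp ?_
    simpa [hR] using hw
  have hwC : (w : ℂ) * R = -2 * ‖p‖ := by exact_mod_cast hw
  rw [zero_sub, norm_neg, h₁, h₂]
  field_simp
  linear_combination (-p) * hwC + (‖p‖ : ℂ) * hq

lemma norm_eq_inv_cos_of_sq_re_of_sq_im {θ : ℝ} (hc : 0 < Real.cos θ) {z : ℂ}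
    (hre : z.re ^ 2 = Real.tan θ ^ 2) (him : z.im ^ 2 = 1) : ‖z‖ = (Real.cos θ)⁻¹ := by
  have h : z.re ^ 2 + z.im ^ 2 = ((Real.cos θ)⁻¹) ^ 2 := by
    rw [hre, him, inv_pow, ← Real.inv_one_add_tan_sq hc.ne', inv_inv, add_comm]
  rw [norm_eq_sqrt_sq_add_sq, h, Real.sqrt_sq (inv_nonneg.mpr hc.le)]

/-- The network `N_V` with vertices `{0, tan θ, -tan θ, i, -i}`
(`0 < θ < π/4`), edges from `0` to each of the four outer vertices and the
four outer edges `[tan θ, i], [i, -tan θ], [-tan θ, -i], [-i, tan θ]`, with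
weights `a_{[0,±tan θ]} = -2 sin θ`, `a_{[0,±i]} = -2 cos θ` and weight `1` on
the four outer edges, is balanced: the force
`∑_{q ∈ V_p} a_{[p,q]} (q-p)/|q-p|` vanishes at every vertex `p`. -/
theorem network_NV_balanced (θ : ℝ) (hθ₀ : 0 < θ) (hθ₁ : θ < Real.pi / 4) :
    -- force at the vertex 0
    (((-2 * Real.sin θ : ℝ) : ℂ) * ((Real.tan θ : ℂ) - 0) /
        (‖(Real.tan θ : ℂ) - 0‖ : ℂ)
      + ((-2 * Real.sin θ : ℝ) : ℂ) * (-(Real.tan θ : ℂ) - 0) /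
          (‖-(Real.tan θ : ℂ) - 0‖ : ℂ)
      + ((-2 * Real.cos θ : ℝ) : ℂ) * (Complex.I - 0) /
          (‖Complex.I - 0‖ : ℂ)
      + ((-2 * Real.cos θ : ℝ) : ℂ) * (-Complex.I - 0) /
          (‖-Complex.I - 0‖ : ℂ) = 0) ∧
    -- force at the vertex tan θ
    (((-2 * Real.sin θ : ℝ) : ℂ) * (0 - (Real.tan θ : ℂ)) /
        (‖0 - (Real.tan θ : ℂ)‖ : ℂ)
      + (1 : ℂ) * (Complex.I - (Real.tan θ : ℂ)) /
          (‖Complex.I - (Real.tan θ : ℂ)‖ : ℂ)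
      + (1 : ℂ) * (-Complex.I - (Real.tan θ : ℂ)) /
          (‖-Complex.I - (Real.tan θ : ℂ)‖ : ℂ) = 0) ∧
    -- force at the vertex -tan θ
    (((-2 * Real.sin θ : ℝ) : ℂ) * (0 - (-(Real.tan θ : ℂ))) /
        (‖0 - (-(Real.tan θ : ℂ))‖ : ℂ)
      + (1 : ℂ) * (Complex.I - (-(Real.tan θ : ℂ))) /
          (‖Complex.I - (-(Real.tan θ : ℂ))‖ : ℂ)
      + (1 : ℂ) * (-Complex.I - (-(Real.tan θ : ℂ))) /
          (‖-Complex.I - (-(Real.tan θ : ℂ))‖ : ℂ) = 0) ∧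
    -- force at the vertex i
    (((-2 * Real.cos θ : ℝ) : ℂ) * (0 - Complex.I) /
        (‖0 - Complex.I‖ : ℂ)
      + (1 : ℂ) * ((Real.tan θ : ℂ) - Complex.I) /
          (‖(Real.tan θ : ℂ) - Complex.I‖ : ℂ)
      + (1 : ℂ) * (-(Real.tan θ : ℂ) - Complex.I) /
          (‖-(Real.tan θ : ℂ) - Complex.I‖ : ℂ) = 0) ∧
    -- force at the vertex -i
    (((-2 * Real.cos θ : ℝ) : ℂ) * (0 - (-Complex.I)) /
        (‖0 - (-Complex.I)‖ : ℂ)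
      + (1 : ℂ) * ((Real.tan θ : ℂ) - (-Complex.I)) /
          (‖(Real.tan θ : ℂ) - (-Complex.I)‖ : ℂ)
      + (1 : ℂ) * (-(Real.tan θ : ℂ) - (-Complex.I)) /
          (‖-(Real.tan θ : ℂ) - (-Complex.I)‖ : ℂ) = 0) := by
  have hc : 0 < Real.cos θ := Real.cos_pos_of_mem_Ioo ⟨by linarith [Real.pi_pos], by linarith⟩
  have ht : 0 < Real.tan θ := Real.tan_pos_of_pos_of_lt_pi_div_two hθ₀ (by linarith)
  have hw_tan : -2 * Real.sin θ * (Real.cos θ)⁻¹ = -2 * ‖(Real.tan θ : ℂ)‖ := by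
    rw [norm_real, Real.norm_of_nonneg ht.le, Real.tan_eq_sin_div_cos]
    ring
  have hw_I : -2 * Real.cos θ * (Real.cos θ)⁻¹ = -2 * ‖I‖ := by
    rw [norm_I, mul_assoc, mul_inv_cancel₀ hc.ne']
  -- `t` is opaque to `simp`, which would otherwise rewrite `↑(Real.tan θ)` to `tan ↑θ`.
  set t := Real.tan θ
  have hdist {z : ℂ} (hre : z.re ^ 2 = t ^ 2) (him : z.im ^ 2 = 1) :=
    norm_eq_inv_cos_of_sq_re_of_sq_im hc hre him
  refine ⟨?_, ?_, ?_, ?_, ?_⟩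
  · rw [add_assoc, force_add_force_neg_eq_zero, force_add_force_neg_eq_zero, add_zero]
  · exact force_eq_zero_of_neg_neighbours (hdist (by simp) (by simp)) (hdist (by simp) (by simp))
      (add_neg_cancel I) hw_tan
  · exact force_eq_zero_of_neg_neighbours (hdist (by simp) (by simp)) (hdist (by simp) (by simp))
      (add_neg_cancel I) (by rwa [norm_neg])
  · exact force_eq_zero_of_neg_neighbours (hdist (by simp) (by simp)) (hdist (by simp) (by simp))
      (add_neg_cancel _) hw_I
  · exact force_eq_zero_of_neg_neighbours (hdist (by simp) (by simp)) (hdist (by simp) (by simp))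
      (add_neg_cancel _) (by rwa [norm_neg])
end
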